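/- For every Q ∈ [0, min{κ,q}] and every ω ∈ [ω̲, ω̄], the quota-second policy Q admits the same measure of minority students as the priority policy α = Q/κ, i.e. min{κ(1−ω)+Q, min{κ,q}} = min{κ(1+Q/κ−ω), min{κ,q}}; consequently the optimal quota-second value sup_{Q ∈ [0, min{κ,q}]} ∫ U(min{κ(1−ω)+Q, min{κ,q}}, ω) dΛ(ω) equals V_P, and, assuming Var[ω] > 0, quota-second policies are weakly preferred to quota-first policies (V_P ≥ V_Q) if and only if κγβ ≤ 1. -/

import Mathlib

/-
The payoff `U(x, ω)` is a concave quadratic in the allotment `x`, affine in `ω`, peaking at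
`x*(ω) = (1 + γ - ω)/(1/κ + γβ)`. A quota-second policy `Q` admits
`κ(1 - ω) + Q = κ(1 + Q/κ - ω)`, so it is the priority policy `Q/κ`. By the regularity
conditions the cap never binds at the optimum: raising a priority past the point where the cap
first binds, or lowering a quota below the floor `κ(1 - ω̲)`, only moves allotments further from
the peak. An allotment `y - s(ω - E ω)` has expected payoff
`U(y, E ω) + (s - (1/2)(1/κ + γβ)s²) Var ω`. The best quota-first policy is the constant
`x*(E ω)` (`s = 0`), the best priority policy has mean allotment `x*(E ω)` and slope `s = κ`,
so `V_P - V_Q = (κ/2)(1 - κγβ) Var ω`.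
-/

open Set MeasureTheory

/-- Authority payoff. -/
noncomputable def U (q κ γ β x ω : ℝ) : ℝ :=
  q * ω + (1 + γ - ω) * x - (1/2) * (1/κ + γ*β) * x^2

/-- Mean of ω under Λ. -/
noncomputable def Emean (Λ : Measure ℝ) : ℝ := ∫ ω, ω ∂Λ

/-- Variance of ω under Λ. -/
noncomputable def Vvar (Λ : Measure ℝ) : ℝ := ∫ ω, (ω - Emean Λ)^2 ∂Λ

/-- Value of the priority policy α. -/
noncomputable def UP (q κ γ β : ℝ) (Λ : Measure ℝ) (α : ℝ) : ℝ :=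
  ∫ ω, U q κ γ β (min (κ*(1+α-ω)) (min κ q)) ω ∂Λ

/-- Value of the quota-first policy Q. -/
noncomputable def UQ (q κ γ β : ℝ) (Λ : Measure ℝ) (Q : ℝ) : ℝ :=
  ∫ ω, U q κ γ β (min (max Q (κ*(1-ω))) (min κ q)) ω ∂Λ

/-- Value of the quota-second policy Q, which admits measure
`min{κ(1−ω)+Q, min{κ,q}}`. -/
noncomputable def UQ2 (q κ γ β : ℝ) (Λ : Measure ℝ) (Q : ℝ) : ℝ :=
  ∫ ω, U q κ γ β (min (κ*(1-ω) + Q) (min κ q)) ω ∂Λ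

/-- Optimal priority value. -/
noncomputable def VP (q κ γ β : ℝ) (Λ : Measure ℝ) : ℝ :=
  sSup (UP q κ γ β Λ '' Set.Ici (0:ℝ))

/-- Optimal quota-first value. -/
noncomputable def VQ (q κ γ β : ℝ) (Λ : Measure ℝ) : ℝ :=
  sSup (UQ q κ γ β Λ '' Set.Icc (0:ℝ) (min κ q))

/-- The maximizer of `U q κ γ β · ω`. The regularity conditions read
`peak κ γ β ωl + κ * (ωh - ωl) < min κ q` and `κ * (1 - ωl) < peak κ γ β ωh`. -/
noncomputable def peak (κ γ β ω : ℝ) : ℝ := (1 + γ - ω) / (1/κ + γ*β)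

section Payoff

variable {q κ γ β x y ω : ℝ}

theorem U_sub_U (q κ γ β x y ω : ℝ) :
    U q κ γ β y ω - U q κ γ β x ω = (y - x) * (1 + γ - ω - (1/2) * (1/κ + γ*β) * (x + y)) := by
  unfold U; ring

theorem peak_antitone (hc : 0 < 1/κ + γ*β) : Antitone (peak κ γ β) :=
  fun _ _ h => div_le_div_of_nonneg_right (by linarith) hc.le

theorem U_le_U_of_le_of_le_peak (hc : 0 < 1/κ + γ*β) (hxy : x ≤ y) (hy : y ≤ peak κ γ β ω) :
    U q κ γ β x ω ≤ U q κ γ β y ω := by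
  rw [peak, le_div_iff₀ hc] at hy
  have := U_sub_U q κ γ β x y ω
  nlinarith [mul_nonneg (sub_nonneg.mpr hxy) (mul_nonneg hc.le (sub_nonneg.mpr hxy))]

theorem U_le_U_of_peak_le_of_le (hc : 0 < 1/κ + γ*β) (hx : peak κ γ β ω ≤ x) (hxy : x ≤ y) :
    U q κ γ β y ω ≤ U q κ γ β x ω := by
  rw [peak, div_le_iff₀ hc] at hx
  have := U_sub_U q κ γ β x y ω
  nlinarith [mul_nonneg (sub_nonneg.mpr hxy) (mul_nonneg hc.le (sub_nonneg.mpr hxy))]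

theorem U_le_U_peak (hc : 0 < 1/κ + γ*β) : U q κ γ β x ω ≤ U q κ γ β (peak κ γ β ω) ω := by
  rcases le_total x (peak κ γ β ω) with h | h
  · exact U_le_U_of_le_of_le_peak hc h le_rfl
  · exact U_le_U_of_peak_le_of_le hc le_rfl h

theorem continuous_U_comp {g : ℝ → ℝ} (hg : Continuous g) :
    Continuous fun ω => U q κ γ β (g ω) ω := by
  unfold U; fun_prop

theorem mul_one_add_div_sub (hκ : κ ≠ 0) (Q ω : ℝ) : κ * (1 + Q / κ - ω) = κ * (1 - ω) + Q := by
  field_simp; ring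

end Payoff

section Moments

variable {Λ : Measure ℝ} [IsProbabilityMeasure Λ] {a b : ℝ}

theorem integrable_of_measure_compl_Icc_eq_zero (hsupp : Λ (Icc a b)ᶜ = 0) {f : ℝ → ℝ}
    (hf : Continuous f) : Integrable f Λ := by
  have hae : ∀ᵐ ω ∂Λ, ω ∈ Icc a b := mem_ae_iff.mpr hsupp
  rw [← Measure.restrict_eq_self_of_ae_mem hae]
  exact hf.continuousOn.integrableOn_compact isCompact_Icc

theorem Emean_mem_Icc (hsupp : Λ (Icc a b)ᶜ = 0) : Emean Λ ∈ Icc a b :=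
  (convex_Icc a b).integral_mem isClosed_Icc (mem_ae_iff.mpr hsupp)
    (integrable_of_measure_compl_Icc_eq_zero hsupp continuous_id)

theorem integral_centered_quadratic (hsupp : Λ (Icc a b)ᶜ = 0) (A B C : ℝ) :
    ∫ ω, (A + B * (ω - Emean Λ) + C * (ω - Emean Λ)^2) ∂Λ = A + C * Vvar Λ := by
  have hint : ∀ {f : ℝ → ℝ}, Continuous f → Integrable f Λ :=
    integrable_of_measure_compl_Icc_eq_zero hsupp
  have hcentered : ∫ ω, (ω - Emean Λ) ∂Λ = 0 := by
    rw [integral_sub (hint (f := fun ω => ω) continuous_id) (integrable_const _)]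
    simp [Emean]
  rw [integral_add (hint (f := fun ω => A + B * (ω - Emean Λ)) (by fun_prop)) (hint (by fun_prop)),
    integral_add (integrable_const A) (hint (f := fun ω => B * (ω - Emean Λ)) (by fun_prop)),
    integral_const_mul, integral_const_mul, hcentered]
  simp [Vvar]

theorem integral_U_sub_mul (hsupp : Λ (Icc a b)ᶜ = 0) (q κ γ β y s : ℝ) :
    ∫ ω, U q κ γ β (y - s * (ω - Emean Λ)) ω ∂Λ
      = U q κ γ β y (Emean Λ) + (s - (1/2) * (1/κ + γ*β) * s^2) * Vvar Λ := by
  have hexpand : ∀ ω, U q κ γ β (y - s * (ω - Emean Λ)) ω = U q κ γ β y (Emean Λ)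
      + (q - s * (1 + γ - Emean Λ) - y + (1/κ + γ*β) * s * y) * (ω - Emean Λ)
      + (s - (1/2) * (1/κ + γ*β) * s^2) * (ω - Emean Λ)^2 := by
    intro ω; unfold U; ring
  simp_rw [hexpand]
  exact integral_centered_quadratic hsupp _ _ _

theorem integral_U (hsupp : Λ (Icc a b)ᶜ = 0) (q κ γ β x : ℝ) :
    ∫ ω, U q κ γ β x ω ∂Λ = U q κ γ β x (Emean Λ) := by
  simpa using integral_U_sub_mul hsupp q κ γ β x 0

end Moments

noncomputable def optimalPriority (κ γ β : ℝ) (Λ : Measure ℝ) : ℝ :=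
  peak κ γ β (Emean Λ) / κ - 1 + Emean Λ

theorem mul_one_add_optimalPriority_sub {κ γ β : ℝ} {Λ : Measure ℝ} (hκ : κ ≠ 0) :
    κ * (1 + optimalPriority κ γ β Λ - Emean Λ) = peak κ γ β (Emean Λ) := by
  unfold optimalPriority; field_simp; ring

theorem UQ2_eq_UP_div {q κ γ β : ℝ} {Λ : Measure ℝ} (hκ : κ ≠ 0) (Q : ℝ) :
    UQ2 q κ γ β Λ Q = UP q κ γ β Λ (Q / κ) := by
  simp only [UQ2, UP, mul_one_add_div_sub hκ]

section Policies

variable {q κ γ β ωl ωh : ℝ} {Λ : Measure ℝ} [IsProbabilityMeasure Λ]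

theorem UP_eq_of_le (hκ : 0 ≤ κ) (hsupp : Λ (Icc ωl ωh)ᶜ = 0) {α : ℝ}
    (hcap : κ * (1 + α - ωl) ≤ min κ q) :
    UP q κ γ β Λ α = U q κ γ β (κ * (1 + α - Emean Λ)) (Emean Λ)
      + (κ - (1/2) * (1/κ + γ*β) * κ^2) * Vvar Λ := by
  rw [← integral_U_sub_mul hsupp]
  refine integral_congr_ae ?_
  filter_upwards [mem_ae_iff.mpr hsupp] with ω hω
  rw [min_eq_left ((mul_le_mul_of_nonneg_left (by linarith [hω.1]) hκ).trans hcap)]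
  ring_nf

theorem UQ_eq_of_le (hκ : 0 ≤ κ) (hsupp : Λ (Icc ωl ωh)ᶜ = 0) {Q : ℝ}
    (hQ : κ * (1 - ωl) ≤ Q) (hcap : Q ≤ min κ q) :
    UQ q κ γ β Λ Q = U q κ γ β Q (Emean Λ) := by
  rw [← integral_U hsupp]
  refine integral_congr_ae ?_
  filter_upwards [mem_ae_iff.mpr hsupp] with ω hω
  rw [max_eq_left ((mul_le_mul_of_nonneg_left (by linarith [hω.1]) hκ).trans hQ),
    min_eq_left hcap]

theorem UP_le_UP (hκ : 0 ≤ κ) (hc : 0 < 1/κ + γ*β) (hsupp : Λ (Icc ωl ωh)ᶜ = 0) {α₀ α : ℝ}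
    (hα : α₀ ≤ α) (hcap : κ * (1 + α₀ - ωl) ≤ min κ q)
    (hpeak : peak κ γ β ωl ≤ κ * (1 + α₀ - ωh)) :
    UP q κ γ β Λ α ≤ UP q κ γ β Λ α₀ := by
  refine integral_mono_ae
    (integrable_of_measure_compl_Icc_eq_zero hsupp (continuous_U_comp (by fun_prop)))
    (integrable_of_measure_compl_Icc_eq_zero hsupp (continuous_U_comp (by fun_prop))) ?_
  filter_upwards [mem_ae_iff.mpr hsupp] with ω hω
  have hω₀ : κ * (1 + α₀ - ω) ≤ min κ q :=
    (mul_le_mul_of_nonneg_left (by linarith [hω.1]) hκ).trans hcap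
  rw [min_eq_left hω₀]
  refine U_le_U_of_peak_le_of_le hc ?_ (le_min (mul_le_mul_of_nonneg_left (by linarith) hκ) hω₀)
  calc peak κ γ β ω ≤ peak κ γ β ωl := peak_antitone hc hω.1
    _ ≤ κ * (1 + α₀ - ωh) := hpeak
    _ ≤ κ * (1 + α₀ - ω) := mul_le_mul_of_nonneg_left (by linarith [hω.2]) hκ

theorem UQ_le_UQ (hκ : 0 ≤ κ) (hc : 0 < 1/κ + γ*β) (hsupp : Λ (Icc ωl ωh)ᶜ = 0) {Q Q₀ : ℝ}
    (hQ : Q ≤ Q₀) (hQ₀ : κ * (1 - ωl) ≤ Q₀) (hcap : Q₀ ≤ min κ q)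
    (hpeak : Q₀ ≤ peak κ γ β ωh) :
    UQ q κ γ β Λ Q ≤ UQ q κ γ β Λ Q₀ := by
  refine integral_mono_ae
    (integrable_of_measure_compl_Icc_eq_zero hsupp (continuous_U_comp (by fun_prop)))
    (integrable_of_measure_compl_Icc_eq_zero hsupp (continuous_U_comp (by fun_prop))) ?_
  filter_upwards [mem_ae_iff.mpr hsupp] with ω hω
  have hω₀ : κ * (1 - ω) ≤ Q₀ := (mul_le_mul_of_nonneg_left (by linarith [hω.1]) hκ).trans hQ₀
  rw [max_eq_left hω₀, min_eq_left hcap]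
  exact U_le_U_of_le_of_le_peak hc ((min_le_left _ _).trans (max_le hQ hω₀))
    (hpeak.trans (peak_antitone hc hω.2))

theorem mul_one_sub_lt_peak_Emean (hc : 0 < 1/κ + γ*β)
    (hsupp : Λ (Icc ωl ωh)ᶜ = 0) (hreg2 : κ * (1 - ωl) < peak κ γ β ωh) :
    κ * (1 - ωl) < peak κ γ β (Emean Λ) :=
  hreg2.trans_le (peak_antitone hc (Emean_mem_Icc hsupp).2)

theorem peak_Emean_add_lt (hκ : 0 ≤ κ) (hc : 0 < 1/κ + γ*β) (hsupp : Λ (Icc ωl ωh)ᶜ = 0)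
    (hreg1 : peak κ γ β ωl + κ * (ωh - ωl) < min κ q) :
    peak κ γ β (Emean Λ) + κ * (Emean Λ - ωl) < min κ q := by
  have hM := Emean_mem_Icc hsupp
  have := peak_antitone hc hM.1
  have := mul_le_mul_of_nonneg_left (sub_le_sub_right hM.2 ωl) hκ
  linarith

theorem UQ_le (hκ : 0 ≤ κ) (hc : 0 < 1/κ + γ*β) (hsupp : Λ (Icc ωl ωh)ᶜ = 0)
    (hreg1 : peak κ γ β ωl + κ * (ωh - ωl) < min κ q) (hreg2 : κ * (1 - ωl) < peak κ γ β ωh)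
    {Q : ℝ} (hQ : Q ≤ min κ q) :
    UQ q κ γ β Λ Q ≤ U q κ γ β (peak κ γ β (Emean Λ)) (Emean Λ) := by
  have hcap : κ * (1 - ωl) ≤ min κ q := by
    have := mul_one_sub_lt_peak_Emean hc hsupp hreg2
    have := peak_Emean_add_lt hκ hc hsupp hreg1
    have := mul_nonneg hκ (sub_nonneg.mpr (Emean_mem_Icc hsupp).1)
    linarith
  calc UQ q κ γ β Λ Q ≤ UQ q κ γ β Λ (max Q (κ * (1 - ωl))) := by
        rcases le_total Q (κ * (1 - ωl)) with h | h
        · rw [max_eq_right h]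
          exact UQ_le_UQ hκ hc hsupp h le_rfl hcap hreg2.le
        · rw [max_eq_left h]
    _ = U q κ γ β (max Q (κ * (1 - ωl))) (Emean Λ) :=
        UQ_eq_of_le hκ hsupp (le_max_right _ _) (max_le hQ hcap)
    _ ≤ U q κ γ β (peak κ γ β (Emean Λ)) (Emean Λ) := U_le_U_peak hc

theorem VQ_eq (hκ : 0 ≤ κ) (hc : 0 < 1/κ + γ*β) (hωh : ωh ≤ 1) (hsupp : Λ (Icc ωl ωh)ᶜ = 0)
    (hreg1 : peak κ γ β ωl + κ * (ωh - ωl) < min κ q) (hreg2 : κ * (1 - ωl) < peak κ γ β ωh) :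
    VQ q κ γ β Λ = U q κ γ β (peak κ γ β (Emean Λ)) (Emean Λ) := by
  have hM := Emean_mem_Icc hsupp
  have hlow := mul_one_sub_lt_peak_Emean hc hsupp hreg2
  have hcap : peak κ γ β (Emean Λ) ≤ min κ q := by
    have := peak_Emean_add_lt hκ hc hsupp hreg1
    have := mul_nonneg hκ (sub_nonneg.mpr hM.1)
    linarith
  refine IsGreatest.csSup_eq ⟨⟨_, ⟨?_, hcap⟩, UQ_eq_of_le hκ hsupp hlow.le hcap⟩, ?_⟩
  · exact (mul_nonneg hκ (by linarith [hM.1, hM.2])).trans hlow.le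
  · rintro _ ⟨Q, hQ, rfl⟩
    exact UQ_le hκ hc hsupp hreg1 hreg2 hQ.2

theorem UP_le (hκ : 0 < κ) (hc : 0 < 1/κ + γ*β) (hsupp : Λ (Icc ωl ωh)ᶜ = 0)
    (hreg1 : peak κ γ β ωl + κ * (ωh - ωl) < min κ q) (α : ℝ) :
    UP q κ γ β Λ α ≤ U q κ γ β (peak κ γ β (Emean Λ)) (Emean Λ)
      + (κ - (1/2) * (1/κ + γ*β) * κ^2) * Vvar Λ := by
  set α₀ := min κ q / κ - 1 + ωl
  have hα₀ : κ * (1 + α₀ - ωl) = min κ q := by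
    simp only [α₀]; field_simp; ring
  have hcap : κ * (1 + min α α₀ - ωl) ≤ min κ q :=
    hα₀ ▸ mul_le_mul_of_nonneg_left (by linarith [min_le_right α α₀]) hκ.le
  calc UP q κ γ β Λ α ≤ UP q κ γ β Λ (min α α₀) := by
        rcases le_total α α₀ with h | h
        · rw [min_eq_left h]
        · rw [min_eq_right h]
          exact UP_le_UP hκ.le hc hsupp h hα₀.le (by linarith)
    _ = _ := UP_eq_of_le hκ.le hsupp hcap
    _ ≤ _ := add_le_add_left (U_le_U_peak hc) _

theorem UP_optimalPriority (hκ : 0 < κ) (hc : 0 < 1/κ + γ*β) (hsupp : Λ (Icc ωl ωh)ᶜ = 0)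
    (hreg1 : peak κ γ β ωl + κ * (ωh - ωl) < min κ q) :
    UP q κ γ β Λ (optimalPriority κ γ β Λ) = U q κ γ β (peak κ γ β (Emean Λ)) (Emean Λ)
      + (κ - (1/2) * (1/κ + γ*β) * κ^2) * Vvar Λ := by
  have hmean := mul_one_add_optimalPriority_sub (γ := γ) (β := β) (Λ := Λ) hκ.ne'
  rw [UP_eq_of_le hκ.le hsupp, hmean]
  have := peak_Emean_add_lt hκ.le hc hsupp hreg1
  linarith

theorem optimalPriority_nonneg (hκ : 0 < κ) (hc : 0 < 1/κ + γ*β) (hsupp : Λ (Icc ωl ωh)ᶜ = 0)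
    (hreg2 : κ * (1 - ωl) < peak κ γ β ωh) : 0 ≤ optimalPriority κ γ β Λ := by
  have hmean := mul_one_add_optimalPriority_sub (γ := γ) (β := β) (Λ := Λ) hκ.ne'
  have := mul_one_sub_lt_peak_Emean hc hsupp hreg2
  have := mul_le_mul_of_nonneg_left (sub_le_sub_left (Emean_mem_Icc hsupp).1 1) hκ.le
  nlinarith

theorem VP_eq (hκ : 0 < κ) (hc : 0 < 1/κ + γ*β) (hsupp : Λ (Icc ωl ωh)ᶜ = 0)
    (hreg1 : peak κ γ β ωl + κ * (ωh - ωl) < min κ q) (hreg2 : κ * (1 - ωl) < peak κ γ β ωh) :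
    VP q κ γ β Λ = U q κ γ β (peak κ γ β (Emean Λ)) (Emean Λ)
      + (κ - (1/2) * (1/κ + γ*β) * κ^2) * Vvar Λ := by
  refine IsGreatest.csSup_eq ⟨⟨_, optimalPriority_nonneg hκ hc hsupp hreg2,
    UP_optimalPriority hκ hc hsupp hreg1⟩, ?_⟩
  rintro _ ⟨α, -, rfl⟩
  exact UP_le hκ hc hsupp hreg1 α

theorem sSup_UQ2_eq_VP (hκ : 0 < κ) (hc : 0 < 1/κ + γ*β) (hωh : ωh ≤ 1)
    (hsupp : Λ (Icc ωl ωh)ᶜ = 0) (hreg1 : peak κ γ β ωl + κ * (ωh - ωl) < min κ q)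
    (hreg2 : κ * (1 - ωl) < peak κ γ β ωh) :
    sSup (UQ2 q κ γ β Λ '' Icc 0 (min κ q)) = VP q κ γ β Λ := by
  have hM := Emean_mem_Icc hsupp
  have hmean := mul_one_add_optimalPriority_sub (γ := γ) (β := β) (Λ := Λ) hκ.ne'
  have hcap : κ * optimalPriority κ γ β Λ ≤ min κ q := by
    have := peak_Emean_add_lt hκ.le hc hsupp hreg1
    have := mul_nonneg hκ.le (by linarith [hM.1, hM.2] : 0 ≤ 1 - ωl)
    nlinarith
  rw [VP_eq hκ hc hsupp hreg1 hreg2]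
  refine IsGreatest.csSup_eq ⟨⟨_, ⟨mul_nonneg hκ.le (optimalPriority_nonneg hκ hc hsupp hreg2),
    hcap⟩, ?_⟩, ?_⟩
  · rw [UQ2_eq_UP_div hκ.ne', mul_div_cancel_left₀ _ hκ.ne']
    exact UP_optimalPriority hκ hc hsupp hreg1
  · rintro _ ⟨Q, -, rfl⟩
    rw [UQ2_eq_UP_div hκ.ne']
    exact UP_le hκ hc hsupp hreg1 _

end Policies

theorem stmt_8_general (q κ γ β ωl ωh : ℝ)
    (hκ : 0 < κ) (hγ : 0 ≤ γ) (hβ : 0 ≤ β)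
    (hωh : ωh ≤ 1)
    (hreg1 : (1 + γ - ωl)/(1/κ + γ*β) + κ*(ωh - ωl) < min κ q)
    (hreg2 : κ*(1 - ωl) < (1 + γ - ωh)/(1/κ + γ*β))
    (Λ : Measure ℝ) [IsProbabilityMeasure Λ] (hsupp : Λ (Set.Icc ωl ωh)ᶜ = 0) :
    (∀ Q ∈ Set.Icc (0:ℝ) (min κ q), ∀ ω ∈ Set.Icc ωl ωh,
      min (κ*(1-ω) + Q) (min κ q) = min (κ*(1 + Q/κ - ω)) (min κ q)) ∧
    sSup (UQ2 q κ γ β Λ '' Set.Icc (0:ℝ) (min κ q)) = VP q κ γ β Λ ∧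
    (0 < Vvar Λ → (VQ q κ γ β Λ ≤ VP q κ γ β Λ ↔ κ*γ*β ≤ 1)) := by
  have hc : 0 < 1/κ + γ*β := by positivity
  have hslope : κ - (1/2) * (1/κ + γ*β) * κ^2 = κ / 2 * (1 - κ*γ*β) := by
    field_simp; ring
  refine ⟨fun Q _ ω _ => by rw [mul_one_add_div_sub hκ.ne'],
    sSup_UQ2_eq_VP hκ hc hωh hsupp hreg1 hreg2, fun hV => ?_⟩
  rw [VP_eq hκ hc hsupp hreg1 hreg2, VQ_eq hκ.le hc hωh hsupp hreg1 hreg2,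
    le_add_iff_nonneg_right, hslope, mul_nonneg_iff_of_pos_right hV,
    mul_nonneg_iff_of_pos_left (half_pos hκ), sub_nonneg]

/-- A quota-second policy Q admits the same measure of minority students as the
priority policy α = Q/κ in every state; hence the optimal quota-second value
equals V_P; and, if Var[ω] > 0, quota-second (equivalently, priorities) is weakly
preferred to quota-first iff κγβ ≤ 1. -/
theorem stmt_8 (q κ γ β ωl ωh : ℝ)
    (hq0 : 0 < q) (hq1 : q ≤ 1) (hκ : 0 < κ) (hγ : 0 ≤ γ) (hβ : 0 ≤ β)
    (hωl : 0 ≤ ωl) (hωlt : ωl < ωh) (hωh : ωh ≤ 1)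
    (hreg1 : (1 + γ - ωl)/(1/κ + γ*β) + κ*(ωh - ωl) < min κ q)
    (hreg2 : κ*(1 - ωl) < (1 + γ - ωh)/(1/κ + γ*β))
    (Λ : Measure ℝ) [IsProbabilityMeasure Λ] (hsupp : Λ (Set.Icc ωl ωh)ᶜ = 0) :
    (∀ Q ∈ Set.Icc (0:ℝ) (min κ q), ∀ ω ∈ Set.Icc ωl ωh,
      min (κ*(1-ω) + Q) (min κ q) = min (κ*(1 + Q/κ - ω)) (min κ q)) ∧
    sSup (UQ2 q κ γ β Λ '' Set.Icc (0:ℝ) (min κ q)) = VP q κ γ β Λ ∧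
    (0 < Vvar Λ → (VQ q κ γ β Λ ≤ VP q κ γ β Λ ↔ κ*γ*β ≤ 1)) :=
  stmt_8_general q κ γ β ωl ωh hκ hγ hβ hωh hreg1 hreg2 Λ hsupp
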